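/- In any BDRG A, the following are equivalent: (1) a → b ≤ r → (a → b) holds for all a, b, r ∈ A (the axiom (RT)); (2) a • (r • s) ≤ a • s holds for all a, r, s ∈ A (the rule (rt)). -/

import Mathlib

/-!
For each `a`, residuation makes `b ↦ a • b` left adjoint to `c ↦ a → c`. Two residuation steps
turn (RT) at `(a, b, r)` into `a • (r • (a → b)) ≤ b` and (rt) at `(a, r, s)` into
`s ≤ r → (a → (a • s))`. Given (RT), the second follows from the unit `s ≤ a → (a • s)`;
given (rt), the first follows from the counit `a • (a → b) ≤ b`.
-/

/-- A bounded distributive lattice-ordered residuated groupoid (BDRG):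
a bounded distributive lattice with operations `prod` (•), `imp` (→), `limp` (←)
satisfying the residuation law: a • b ≤ c ↔ b ≤ a → c ↔ a ≤ c ← b. -/
structure BDRG (A : Type*) [DistribLattice A] [BoundedOrder A] where
  prod : A → A → A
  imp : A → A → A
  limp : A → A → A
  res_imp : ∀ a b c : A, prod a b ≤ c ↔ b ≤ imp a c
  res_limp : ∀ a b c : A, prod a b ≤ c ↔ a ≤ limp c b

namespace BDRG

variable {A : Type*} [DistribLattice A] [BoundedOrder A] (G : BDRG A)

theorem gc_prod_imp (a : A) : GaloisConnection (G.prod a) (G.imp a) :=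
  G.res_imp a

theorem le_imp_prod (a s : A) : s ≤ G.imp a (G.prod a s) :=
  (G.gc_prod_imp a).le_u_l s

theorem prod_imp_le (a b : A) : G.prod a (G.imp a b) ≤ b :=
  (G.gc_prod_imp a).l_u_le b

theorem imp_le_imp_imp_iff (a b r : A) :
    G.imp a b ≤ G.imp r (G.imp a b) ↔ G.prod a (G.prod r (G.imp a b)) ≤ b := by
  rw [← G.res_imp, ← G.res_imp]

theorem prod_prod_le_prod_iff (a r s : A) :
    G.prod a (G.prod r s) ≤ G.prod a s ↔ s ≤ G.imp r (G.imp a (G.prod a s)) := by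
  rw [G.res_imp, G.res_imp]

end BDRG

theorem corr_RT_rt {A : Type*} [DistribLattice A] [BoundedOrder A] (G : BDRG A) :
    (∀ a b r : A, G.imp a b ≤ G.imp r (G.imp a b)) ↔
    (∀ a r s : A, G.prod a (G.prod r s) ≤ G.prod a s) := by
  constructor
  · intro hRT a r s
    rw [G.prod_prod_le_prod_iff]
    exact (G.le_imp_prod a s).trans (hRT a _ r)
  · intro hrt a b r
    rw [G.imp_le_imp_imp_iff]
    exact (hrt a r _).trans (G.prod_imp_le a b)
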